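/- arXiv:2308.06158 — 2 statements merged into one kernel-verified Lean document; each statement's English description precedes it below -/
import Mathlib

section
/- Let q be a real number, x a real number with 1+(q-1)x ≠ 0, and let f : ℝ → ℝ be differentiable at x. Then the commutator of D₋₁ with the operator of multiplication by g_q satisfies the deformed Heisenberg relation: (1+(q-1)x)·(d/dx)[g_q(x)·f(x)] - g_q(x)·(1+(q-1)x)·f'(x) = (q + (1-q)·g_q(x))·f(x). -/
/-!
By the Leibniz rule, the commutator of `D₋₁` with multiplication by `g_q` is multiplication by
`(1 + (q - 1) x) g_q'`, and `g_q` solves the Riccati equation `(1 + (q - 1) x) g_q' = q + (1 - q) g_q`.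
-/

/-- The q-rational transition map. -/
noncomputable def gq (q x : ℝ) : ℝ := (1 + (x - 1) * q) / (1 + (q - 1) * x)

theorem mul_deriv_mul_sub_mul_mul_deriv {𝕜 : Type*} [NontriviallyNormedField 𝕜] {g f : 𝕜 → 𝕜}
    {x : 𝕜} (c : 𝕜) (hg : DifferentiableAt 𝕜 g x) (hf : DifferentiableAt 𝕜 f x) :
    c * deriv (fun y => g y * f y) x - g x * (c * deriv f x) = c * deriv g x * f x := by
  rw [deriv_fun_mul hg hf]
  ring

theorem hasDerivAt_gq (q x : ℝ) (hx : 1 + (q - 1) * x ≠ 0) :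
    HasDerivAt (gq q) ((q + (1 - q) * gq q x) / (1 + (q - 1) * x)) x := by
  have hnum : HasDerivAt (fun y : ℝ => 1 + (y - 1) * q) q x := by
    simpa using (((hasDerivAt_id x).sub_const 1).mul_const q).const_add 1
  have hden : HasDerivAt (fun y : ℝ => 1 + (q - 1) * y) (q - 1) x := by
    simpa using ((hasDerivAt_id x).const_mul (q - 1)).const_add 1
  refine (hnum.fun_div hden hx).congr_deriv ?_
  rw [gq]
  field_simp
  ring

/-- The deformed Heisenberg relation `[D₋₁, g_q] = q + (1-q)·g_q`, where `g_q` acts as a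
multiplication operator. -/
theorem deformed_heisenberg (q x : ℝ) (hx : 1 + (q - 1) * x ≠ 0)
    (f : ℝ → ℝ) (hf : DifferentiableAt ℝ f x) :
    (1 + (q - 1) * x) * deriv (fun y => gq q y * f y) x
        - gq q x * ((1 + (q - 1) * x) * deriv f x)
      = (q + (1 - q) * gq q x) * f x := by
  have hg := hasDerivAt_gq q x hx
  rw [mul_deriv_mul_sub_mul_mul_deriv _ hg.differentiableAt hf, hg.deriv, mul_div_cancel₀ _ hx]
end

section
/- Let q be a real number, x a real number, and f : ℝ → ℝ differentiable at x. If 1+(q-1)x ≠ 0 then g_q(x)·(D₀f)(x) = (1-q)·(D₀f)(x) + (q²-q+1)·(D₁f)(x) and g_q(x)·(D₋₁f)(x) = (D₀f)(x) + (1-q)·(D₁f)(x). If moreover 1+(x-1)q ≠ 0 then (q/g_q(x))·(D₀f)(x) = (q-1)·(D₀f)(x) + (q²-q+1)·(D₋₁f)(x) and (q/g_q(x))·(D₁f)(x) = (D₀f)(x) + (q-1)·(D₋₁f)(x). -/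
/-- `(D₋₁ f)(x) = (1+(q-1)x)·f'(x)`. -/
noncomputable def Dm1 (q : ℝ) (f : ℝ → ℝ) (x : ℝ) : ℝ := (1 + (q - 1) * x) * deriv f x

/-- `(D₀ f)(x) = (1+(x-1)q)(1+(q-1)x)·f'(x)`. -/
noncomputable def D0 (q : ℝ) (f : ℝ → ℝ) (x : ℝ) : ℝ :=
  (1 + (x - 1) * q) * (1 + (q - 1) * x) * deriv f x

/-- `(D₁ f)(x) = (1+(x-1)q)·x·f'(x)`. -/
noncomputable def D1 (q : ℝ) (f : ℝ → ℝ) (x : ℝ) : ℝ := (1 + (x - 1) * q) * x * deriv f x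

/-! Write `A = 1 + (x-1)q` and `B = 1 + (q-1)x`, so that `g_q = A/B`, `D₋₁ = B f'`, `D₀ = AB f'` and
`D₁ = Ax f'`. Multiplying by `g_q` trades a factor `B` for `A`, and multiplying by `q/g_q` trades
`A` for `qB`. Each identity then reduces to one of the linear relations
`A = (1-q)B + (q²-q+1)x`, `B + (1-q)x = 1`, `qB = (q-1)A + (q²-q+1)` and `A + (q-1) = qx`. -/

section

variable {q x : ℝ}

theorem gq_mul_denom (hB : 1 + (q - 1) * x ≠ 0) :
    gq q x * (1 + (q - 1) * x) = 1 + (x - 1) * q :=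
  div_mul_cancel₀ _ hB

theorem div_gq_mul_numer (hA : 1 + (x - 1) * q ≠ 0) :
    q / gq q x * (1 + (x - 1) * q) = q * (1 + (q - 1) * x) := by
  rw [gq, div_div_eq_mul_div, div_mul_cancel₀ _ hA]

variable (f : ℝ → ℝ)

theorem gq_mul_D0 (hB : 1 + (q - 1) * x ≠ 0) :
    gq q x * D0 q f x = (1 - q) * D0 q f x + (q ^ 2 - q + 1) * D1 q f x := by
  unfold D0 D1
  linear_combination (1 + (x - 1) * q) * deriv f x * gq_mul_denom hB

theorem gq_mul_Dm1 (hB : 1 + (q - 1) * x ≠ 0) :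
    gq q x * Dm1 q f x = D0 q f x + (1 - q) * D1 q f x := by
  unfold Dm1 D0 D1
  linear_combination deriv f x * gq_mul_denom hB

theorem div_gq_mul_D0 (hA : 1 + (x - 1) * q ≠ 0) :
    q / gq q x * D0 q f x = (q - 1) * D0 q f x + (q ^ 2 - q + 1) * Dm1 q f x := by
  unfold D0 Dm1
  linear_combination (1 + (q - 1) * x) * deriv f x * div_gq_mul_numer hA

theorem div_gq_mul_D1 (hA : 1 + (x - 1) * q ≠ 0) :
    q / gq q x * D1 q f x = D0 q f x + (q - 1) * Dm1 q f x := by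
  unfold D1 D0 Dm1
  linear_combination x * deriv f x * div_gq_mul_numer hA

end

theorem mult_by_gq_general (q x : ℝ) (f : ℝ → ℝ) :
    (1 + (q - 1) * x ≠ 0 →
      (gq q x * D0 q f x = (1 - q) * D0 q f x + (q ^ 2 - q + 1) * D1 q f x) ∧
      (gq q x * Dm1 q f x = D0 q f x + (1 - q) * D1 q f x)) ∧
    (1 + (q - 1) * x ≠ 0 → 1 + (x - 1) * q ≠ 0 →
      ((q / gq q x) * D0 q f x = (q - 1) * D0 q f x + (q ^ 2 - q + 1) * Dm1 q f x) ∧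
      ((q / gq q x) * D1 q f x = D0 q f x + (q - 1) * Dm1 q f x)) :=
  ⟨fun hB => ⟨gq_mul_D0 f hB, gq_mul_Dm1 f hB⟩,
    fun _ hA => ⟨div_gq_mul_D0 f hA, div_gq_mul_D1 f hA⟩⟩

/-- Multiplication by `g_q` and by `q·g_q⁻¹` maps the operators `D₋₁, D₀, D₁`
to combinations of each other. -/
theorem mult_by_gq (q x : ℝ) (f : ℝ → ℝ) (hf : DifferentiableAt ℝ f x) :
    (1 + (q - 1) * x ≠ 0 →
      (gq q x * D0 q f x = (1 - q) * D0 q f x + (q ^ 2 - q + 1) * D1 q f x) ∧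
      (gq q x * Dm1 q f x = D0 q f x + (1 - q) * D1 q f x)) ∧
    (1 + (q - 1) * x ≠ 0 → 1 + (x - 1) * q ≠ 0 →
      ((q / gq q x) * D0 q f x = (q - 1) * D0 q f x + (q ^ 2 - q + 1) * Dm1 q f x) ∧
      ((q / gq q x) * D1 q f x = D0 q f x + (q - 1) * Dm1 q f x)) :=
  mult_by_gq_general q x f
end
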